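/- arXiv:0910.4067 — 4 statements merged into one kernel-verified Lean document; each statement's English description precedes it below -/
import Mathlib

section
/- A binary phylogenetic tree on a set X with at least 3 leaves is uniquely determined (up to isomorphism preserving leaf labels) by the set of rooted triplets it induces. -/
/-! Induction on the tree. Below a root with children `l` and `r`, a leaf `x` lies in the same
child as a leaf `a` iff some leaf `c` gives the triplet `xa|c`, so the triplets fix the split of
the leaves at the root up to exchanging the children. The triplets `ab|c` of a child with `a`
and `c` leaves of that child are exactly those of the whole tree, so the induction hypothesis
applies to the matched children. -/

/-- Rooted binary trees with leaves labelled by `X`. -/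
inductive BTree (X : Type) where
  | leaf (x : X)
  | node (l r : BTree X)

namespace BTree
variable {X : Type}

/-- The list of leaf labels of a tree. -/
def leafList : BTree X → List X
  | leaf x => [x]
  | node l r => leafList l ++ leafList r

/-- `IsSub s t`: `s` is a (rooted) subtree of `t`; subtrees correspond to vertices of `t`. -/
inductive IsSub : BTree X → BTree X → Prop
  | refl (t : BTree X) : IsSub t t
  | left {s l r : BTree X} : IsSub s l → IsSub s (node l r)
  | right {s l r : BTree X} : IsSub s r → IsSub s (node l r)

/-- `t` induces the rooted triplet `ab|c`: some subtree (i.e. the one rooted at the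
lowest common ancestor of `a` and `b`, a proper descendant of the lowest common
ancestor of `a` and `c`) contains the leaves `a` and `b` but not `c`. -/
def Induces (t : BTree X) (a b c : X) : Prop :=
  ∃ s, IsSub s t ∧ a ∈ s.leafList ∧ b ∈ s.leafList ∧ c ∉ s.leafList

/-- `t` is a binary phylogenetic tree on `X`: its leaves are bijectively labelled by `X`. -/
def IsPhyloOn [Fintype X] (t : BTree X) : Prop :=
  t.leafList.Nodup ∧ ∀ x : X, x ∈ t.leafList

/-- Isomorphism of rooted binary phylogenetic trees fixing all leaf labels
(children may be exchanged). -/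
inductive Iso : BTree X → BTree X → Prop
  | leaf (x : X) : Iso (leaf x) (leaf x)
  | node {l₁ r₁ l₂ r₂ : BTree X} : Iso l₁ l₂ → Iso r₁ r₂ → Iso (node l₁ r₁) (node l₂ r₂)
  | swap {l₁ r₁ l₂ r₂ : BTree X} : Iso l₁ r₂ → Iso r₁ l₂ → Iso (node l₁ r₁) (node l₂ r₂)

end BTree

namespace BTree
variable {X : Type}

@[simp]
lemma leafList_leaf (x : X) : (leaf x).leafList = [x] := rfl

@[simp]
lemma mem_leafList_node {l r : BTree X} {x : X} :
    x ∈ (node l r).leafList ↔ x ∈ l.leafList ∨ x ∈ r.leafList :=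
  List.mem_append

lemma exists_mem_leafList : ∀ t : BTree X, ∃ x, x ∈ t.leafList
  | leaf x => ⟨x, List.mem_singleton_self x⟩
  | node l _ => (exists_mem_leafList l).imp fun _ hx => mem_leafList_node.2 (.inl hx)

lemma nodup_leafList_node {l r : BTree X} :
    (node l r).leafList.Nodup ↔
      l.leafList.Nodup ∧ r.leafList.Nodup ∧ l.leafList.Disjoint r.leafList :=
  List.nodup_append'

lemma IsSub.leafList_subset {s t : BTree X} (h : IsSub s t) : s.leafList ⊆ t.leafList := by
  induction h with
  | refl => exact List.Subset.refl _
  | left _ ih => exact fun x hx => mem_leafList_node.2 (.inl (ih hx))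
  | right _ ih => exact fun x hx => mem_leafList_node.2 (.inr (ih hx))

lemma eq_leaf_of_forall_mem_iff {t : BTree X} {x : X} (hnd : t.leafList.Nodup)
    (h : ∀ y, y ∈ t.leafList ↔ y = x) : t = leaf x := by
  cases t with
  | leaf y => simpa using h y
  | node l r =>
    obtain ⟨a, ha⟩ := exists_mem_leafList l
    obtain ⟨b, hb⟩ := exists_mem_leafList r
    have hax : a = x := (h a).1 (mem_leafList_node.2 (.inl ha))
    have hbx : b = x := (h b).1 (mem_leafList_node.2 (.inr hb))
    subst hax hbx
    exact absurd hb ((nodup_leafList_node.1 hnd).2.2 ha)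

lemma induces_node_comm (l r : BTree X) (a b c : X) :
    (node l r).Induces a b c ↔ (node r l).Induces a b c := by
  suffices ∀ l r : BTree X, (node l r).Induces a b c → (node r l).Induces a b c from
    ⟨this l r, this r l⟩
  rintro l r ⟨s, hs, has, hbs, hcs⟩
  cases hs with
  | refl => exact ⟨node r l, .refl _, by simp_all [or_comm]⟩
  | left h => exact ⟨s, .right h, has, hbs, hcs⟩
  | right h => exact ⟨s, .left h, has, hbs, hcs⟩

section Disjoint

variable {l r : BTree X} (hd : l.leafList.Disjoint r.leafList)
include hd

lemma mem_right_iff {x : X} :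
    x ∈ r.leafList ↔ x ∈ (node l r).leafList ∧ x ∉ l.leafList := by
  simp only [mem_leafList_node]
  exact ⟨fun hx => ⟨.inr hx, fun hl => hd hl hx⟩, fun ⟨hx, hl⟩ => hx.resolve_left hl⟩

lemma mem_left_iff_exists_induces {a x : X} (ha : a ∈ l.leafList) :
    x ∈ l.leafList ↔ ∃ c ∈ (node l r).leafList, (node l r).Induces x a c := by
  constructor
  · intro hx
    obtain ⟨c, hc⟩ := exists_mem_leafList r
    exact ⟨c, mem_leafList_node.2 (.inr hc), l, .left (.refl l), hx, ha, fun hcl => hd hcl hc⟩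
  · rintro ⟨c, hc, s, hs, hxs, has, hcs⟩
    cases hs with
    | refl => exact absurd hc hcs
    | left h => exact h.leafList_subset hxs
    | right h => exact absurd (h.leafList_subset has) (hd ha)

lemma induces_left_iff {a b c : X} (hc : c ∈ (node l r).leafList) :
    l.Induces a b c ↔ a ∈ l.leafList ∧ (node l r).Induces a b c := by
  constructor
  · rintro ⟨s, hs, has, hbs, hcs⟩
    exact ⟨hs.leafList_subset has, s, .left hs, has, hbs, hcs⟩
  · rintro ⟨ha, s, hs, has, hbs, hcs⟩
    cases hs with
    | refl => exact absurd hc hcs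
    | left h => exact ⟨s, h, has, hbs, hcs⟩
    | right h => exact absurd (h.leafList_subset has) (hd ha)

lemma induces_right_iff {a b c : X} (hc : c ∈ (node l r).leafList) :
    r.Induces a b c ↔ a ∈ r.leafList ∧ (node l r).Induces a b c := by
  rw [induces_node_comm]
  exact induces_left_iff hd.symm (by simpa [or_comm] using hc)

end Disjoint

/-- Triplets `ab|c` with `c` outside the tree are not compared: for a child of the root they
are not determined by the triplets of the whole tree. -/
def TripletEquiv (t₁ t₂ : BTree X) : Prop :=
  (∀ x, x ∈ t₁.leafList ↔ x ∈ t₂.leafList) ∧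
    ∀ a b c, c ∈ t₁.leafList → (t₁.Induces a b c ↔ t₂.Induces a b c)

lemma TripletEquiv.node_comm {t l r : BTree X} (h : TripletEquiv t (node l r)) :
    TripletEquiv t (node r l) :=
  ⟨fun x => by simpa [or_comm] using h.1 x,
    fun a b c hc => (h.2 a b c hc).trans (induces_node_comm l r a b c)⟩

lemma TripletEquiv.children {l₁ r₁ l₂ r₂ : BTree X} {a : X}
    (hd₁ : l₁.leafList.Disjoint r₁.leafList) (hd₂ : l₂.leafList.Disjoint r₂.leafList)
    (h : TripletEquiv (node l₁ r₁) (node l₂ r₂)) (ha₁ : a ∈ l₁.leafList)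
    (ha₂ : a ∈ l₂.leafList) :
    TripletEquiv l₁ l₂ ∧ TripletEquiv r₁ r₂ := by
  obtain ⟨hmem, htrip⟩ := h
  have hl : ∀ x, x ∈ l₁.leafList ↔ x ∈ l₂.leafList := fun x => by
    rw [mem_left_iff_exists_induces hd₁ ha₁, mem_left_iff_exists_induces hd₂ ha₂]
    exact ⟨fun ⟨c, hc, hi⟩ => ⟨c, (hmem c).1 hc, (htrip x a c hc).1 hi⟩,
      fun ⟨c, hc, hi⟩ => ⟨c, (hmem c).2 hc, (htrip x a c ((hmem c).2 hc)).2 hi⟩⟩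
  have hr : ∀ x, x ∈ r₁.leafList ↔ x ∈ r₂.leafList := fun x => by
    rw [mem_right_iff hd₁, mem_right_iff hd₂, hmem, hl]
  refine ⟨⟨hl, fun a b c hc => ?_⟩, ⟨hr, fun a b c hc => ?_⟩⟩
  · have hc₁ : c ∈ (node l₁ r₁).leafList := mem_leafList_node.2 (.inl hc)
    rw [induces_left_iff hd₁ hc₁, induces_left_iff hd₂ ((hmem c).1 hc₁), hl, htrip a b c hc₁]
  · have hc₁ : c ∈ (node l₁ r₁).leafList := mem_leafList_node.2 (.inr hc)
    rw [induces_right_iff hd₁ hc₁, induces_right_iff hd₂ ((hmem c).1 hc₁), hr, htrip a b c hc₁]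

theorem iso_of_tripletEquiv {t₁ t₂ : BTree X} (hnd₁ : t₁.leafList.Nodup)
    (hnd₂ : t₂.leafList.Nodup) (h : TripletEquiv t₁ t₂) : Iso t₁ t₂ := by
  induction t₁ generalizing t₂ with
  | leaf x =>
    rw [eq_leaf_of_forall_mem_iff hnd₂ fun y => by simpa using (h.1 y).symm]
    exact .leaf x
  | node l₁ r₁ ihl ihr =>
    cases t₂ with
    | leaf y => cases eq_leaf_of_forall_mem_iff hnd₁ fun x => by simpa using h.1 x
    | node l₂ r₂ =>
      obtain ⟨hndl₁, hndr₁, hd₁⟩ := nodup_leafList_node.1 hnd₁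
      obtain ⟨hndl₂, hndr₂, hd₂⟩ := nodup_leafList_node.1 hnd₂
      obtain ⟨a, ha⟩ := exists_mem_leafList l₁
      rcases mem_leafList_node.1 ((h.1 a).1 (mem_leafList_node.2 (.inl ha))) with ha₂ | ha₂
      · obtain ⟨hl, hr⟩ := h.children hd₁ hd₂ ha ha₂
        exact .node (ihl hndl₁ hndl₂ hl) (ihr hndr₁ hndr₂ hr)
      · obtain ⟨hl, hr⟩ := h.node_comm.children hd₁ hd₂.symm ha ha₂
        exact .swap (ihl hndl₁ hndr₂ hl) (ihr hndr₁ hndl₂ hr)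

end BTree

theorem stmt_0_general {X : Type} [Fintype X] (t₁ t₂ : BTree X)
    (h₁ : t₁.IsPhyloOn) (h₂ : t₂.IsPhyloOn)
    (htrip : ∀ a b c : X, t₁.Induces a b c ↔ t₂.Induces a b c) :
    BTree.Iso t₁ t₂ :=
  BTree.iso_of_tripletEquiv h₁.1 h₂.1
    ⟨fun x => iff_of_true (h₁.2 x) (h₂.2 x), fun a b c _ => htrip a b c⟩

/-- a binary phylogenetic tree on a set `X` with at least 3 leaves is
uniquely determined, up to isomorphism preserving the leaf labels, by the set of
rooted triplets it induces. -/
theorem stmt_0 {X : Type} [Fintype X] (t₁ t₂ : BTree X)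
    (h₁ : t₁.IsPhyloOn) (h₂ : t₂.IsPhyloOn) (hX : 3 ≤ Fintype.card X)
    (htrip : ∀ a b c : X, t₁.Induces a b c ↔ t₂.Induces a b c) :
    BTree.Iso t₁ t₂ :=
  stmt_0_general t₁ t₂ h₁ h₂ htrip
end

section
/- If T is a dense triplet set on a finite leaf set L (i.e., for every 3-element subset of L at least one triplet on that subset is in T), then the collection of maximal SN-sets of T forms a partition of L. -/
/- A triplet `xy|z` on distinct leaves is represented as an ordered tuple `(x,y,z)`;
since `xy|z = yx|z`, triplet sets are assumed symmetric in the first two entries. -/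

/-- The leaf set `L(T)` of a triplet set: all elements occurring in some triplet. -/
def leafSet {X : Type} (T : Set (X × X × X)) : Set X :=
  {x | ∃ a b c, (a, b, c) ∈ T ∧ (x = a ∨ x = b ∨ x = c)}

/-- `S ⊆ L(T)` is an SN-set if there is no triplet `xy|z ∈ T` with `x, z ∈ S` and `y ∉ S`. -/
def IsSN {X : Type} (T : Set (X × X × X)) (S : Set X) : Prop :=
  S ⊆ leafSet T ∧ ∀ a b c, (a, b, c) ∈ T → a ∈ S → c ∈ S → b ∈ S

/-- A maximal SN-set: an SN-set `S ≠ L(T)` such that no SN-set `S' ≠ L(T)` properly contains it. -/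
def IsMaxSN {X : Type} (T : Set (X × X × X)) (S : Set X) : Prop :=
  IsSN T S ∧ S ≠ leafSet T ∧
    ∀ S', IsSN T S' → S' ≠ leafSet T → S ⊆ S' → S' = S

/-- `T` is dense: for every 3-element subset of `L(T)` at least one triplet on it is in `T`. -/
def TripletDense {X : Type} (T : Set (X × X × X)) : Prop :=
  ∀ x y z, x ∈ leafSet T → y ∈ leafSet T → z ∈ leafSet T →
    x ≠ y → x ≠ z → y ≠ z → ((x, y, z) ∈ T ∨ (x, z, y) ∈ T ∨ (y, z, x) ∈ T)

/-!
Density makes any two SN-sets that share a leaf nested: if `a ∈ S₁ \ S₂`, `c ∈ S₂ \ S₁` and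
`w ∈ S₁ ∩ S₂`, each of the three possible triplets on `{a, c, w}` violates the SN-property of
`S₁` or of `S₂`. Hence two distinct maximal SN-sets are disjoint, and every leaf lies in one of
them, namely in a maximal element of the finite family of proper SN-sets containing its singleton.
-/

section

variable {X : Type} {T : Set (X × X × X)}

theorem mem_leafSet_fst {a b c : X} (h : (a, b, c) ∈ T) : a ∈ leafSet T :=
  ⟨a, b, c, h, Or.inl rfl⟩

theorem mem_leafSet_snd {a b c : X} (h : (a, b, c) ∈ T) : b ∈ leafSet T :=
  ⟨a, b, c, h, Or.inr (Or.inl rfl)⟩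

theorem IsSN.subset_or_subset (hsym : ∀ a b c, (a, b, c) ∈ T → (b, a, c) ∈ T)
    (hdense : TripletDense T) {S₁ S₂ : Set X} (h₁ : IsSN T S₁) (h₂ : IsSN T S₂)
    (hne : (S₁ ∩ S₂).Nonempty) : S₁ ⊆ S₂ ∨ S₂ ⊆ S₁ := by
  obtain ⟨w, hw₁, hw₂⟩ := hne
  by_contra! h
  obtain ⟨a, ha₁, ha₂⟩ := Set.not_subset.mp h.1
  obtain ⟨c, hc₂, hc₁⟩ := Set.not_subset.mp h.2
  have hac : a ≠ c := fun e => ha₂ (e ▸ hc₂)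
  have haw : a ≠ w := fun e => ha₂ (e ▸ hw₂)
  have hcw : c ≠ w := fun e => hc₁ (e ▸ hw₁)
  rcases hdense a c w (h₁.1 ha₁) (h₂.1 hc₂) (h₁.1 hw₁) hac haw hcw with ht | ht | ht
  · exact hc₁ (h₁.2 a c w ht ha₁ hw₁)
  · exact ha₂ (h₂.2 w a c (hsym a w c ht) hw₂ hc₂)
  · exact hc₁ (h₁.2 w c a (hsym c w a ht) hw₁ ha₁)

theorem IsMaxSN.disjoint (hsym : ∀ a b c, (a, b, c) ∈ T → (b, a, c) ∈ T)
    (hdense : TripletDense T) {S S' : Set X} (hS : IsMaxSN T S) (hS' : IsMaxSN T S')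
    (hne : S ≠ S') : Disjoint S S' := by
  rw [Set.disjoint_iff_inter_eq_empty, ← Set.not_nonempty_iff_eq_empty]
  intro hinter
  rcases hS.1.subset_or_subset hsym hdense hS'.1 hinter with hsub | hsub
  · exact hne (hS.2.2 S' hS'.1 hS'.2.1 hsub).symm
  · exact hne (hS'.2.2 S hS.1 hS.2.1 hsub)

theorem isSN_singleton (hac : ∀ a b c, (a, b, c) ∈ T → a ≠ c) {x : X} (hx : x ∈ leafSet T) :
    IsSN T {x} :=
  ⟨Set.singleton_subset_iff.mpr hx, fun a b c ht ha hc =>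
    absurd (ha.trans hc.symm) (hac a b c ht)⟩

theorem singleton_ne_leafSet (hab : ∀ a b c, (a, b, c) ∈ T → a ≠ b) {x : X}
    (hx : x ∈ leafSet T) : {x} ≠ leafSet T := by
  obtain ⟨a, b, c, ht, -⟩ := hx
  intro he
  have ha : a ∈ ({x} : Set X) := he ▸ mem_leafSet_fst ht
  have hb : b ∈ ({x} : Set X) := he ▸ mem_leafSet_snd ht
  exact hab a b c ht (ha.trans hb.symm)

theorem IsSN.exists_isMaxSN_superset [Finite X] {S : Set X} (hS : IsSN T S)
    (hne : S ≠ leafSet T) : ∃ M, IsMaxSN T M ∧ S ⊆ M := by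
  obtain ⟨M, ⟨hM, hMne, hSM⟩, hmax⟩ := Set.Finite.exists_maximalFor id
    {M | IsSN T M ∧ M ≠ leafSet T ∧ S ⊆ M} (Set.toFinite _) ⟨S, hS, hne, subset_rfl⟩
  refine ⟨M, ⟨hM, hMne, fun M' hM' hM'ne hMM' => ?_⟩, hSM⟩
  exact (hmax ⟨hM', hM'ne, hSM.trans hMM'⟩ hMM').antisymm hMM'

end

/-- if `T` is a dense triplet set on its (finite) leaf set, then the maximal
SN-sets of `T` cover the leaf set and are pairwise disjoint, i.e. they form a partition. -/
theorem stmt_5 {X : Type} [Fintype X] (T : Set (X × X × X))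
    (hproper : ∀ a b c, (a, b, c) ∈ T → a ≠ b ∧ a ≠ c ∧ b ≠ c)
    (hsym : ∀ a b c, (a, b, c) ∈ T → (b, a, c) ∈ T)
    (hdense : TripletDense T) :
    (∀ x ∈ leafSet T, ∃ S, IsMaxSN T S ∧ x ∈ S) ∧
    (∀ S S', IsMaxSN T S → IsMaxSN T S' → S ≠ S' → Disjoint S S') := by
  refine ⟨fun x hx => ?_, fun S S' hS hS' hne => hS.disjoint hsym hdense hS' hne⟩
  have hsingle : IsSN T {x} := isSN_singleton (fun a b c ht => (hproper a b c ht).2.1) hx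
  obtain ⟨M, hM, hxM⟩ := hsingle.exists_isMaxSN_superset
    (singleton_ne_leafSet (fun a b c ht => (hproper a b c ht).1) hx)
  exact ⟨M, hM, hxM rfl⟩
end

section
/- For any triplet set T with leaf set L, the set L itself and every singleton subset of L are SN-sets of T, and the intersection of two SN-sets of a dense triplet set is an SN-set. -/
section

variable {X : Type} {T : Set (X × X × X)}

theorem isSN_leafSet : IsSN T (leafSet T) :=
  ⟨subset_rfl, fun a b c h _ _ => ⟨a, b, c, h, .inr (.inl rfl)⟩⟩

theorem IsSN.inter {S S' : Set X} (hS : IsSN T S) (hS' : IsSN T S') : IsSN T (S ∩ S') :=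
  ⟨Set.inter_subset_left.trans hS.1, fun a b c h ha hc =>
    ⟨hS.2 a b c h ha.1 hc.1, hS'.2 a b c h ha.2 hc.2⟩⟩

end

theorem stmt_6_general {X : Type} (T : Set (X × X × X))
    (hproper : ∀ a b c, (a, b, c) ∈ T → a ≠ b ∧ a ≠ c ∧ b ≠ c) :
    IsSN T (leafSet T) ∧
    (∀ x ∈ leafSet T, IsSN T {x}) ∧
    (TripletDense T → ∀ S S', IsSN T S → IsSN T S' → IsSN T (S ∩ S')) :=
  ⟨isSN_leafSet, fun _ => isSN_singleton fun a b c h => (hproper a b c h).2.1,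
    fun _ _ _ => IsSN.inter⟩

/-- for any triplet set `T` with leaf set `L`, the set `L` itself and every
singleton subset of `L` are SN-sets of `T`; and if `T` is dense, the intersection of any
two SN-sets of `T` is again an SN-set. -/
theorem stmt_6 {X : Type} (T : Set (X × X × X))
    (hproper : ∀ a b c, (a, b, c) ∈ T → a ≠ b ∧ a ≠ c ∧ b ≠ c)
    (hsym : ∀ a b c, (a, b, c) ∈ T → (b, a, c) ∈ T) :
    IsSN T (leafSet T) ∧
    (∀ x ∈ leafSet T, IsSN T {x}) ∧
    (TripletDense T → ∀ S S', IsSN T S → IsSN T S' → IsSN T (S ∩ S')) :=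
  stmt_6_general T hproper
end

section
/- Let N be a level-1 network and let a = (u,v) be an arc of N with v not a reticulation. If v is not a leaf and u is not a reticulation, then contracting the arc a (identifying u and v) yields a DAG N' that is again a level-1 network, and every triplet consistent with N' is consistent with N. -/
section Graph
variable {V : Type}

/-- `IsWalk arc a l b`: `l` is the list of successive vertices (after `a`) of a directed
walk from `a` to `b`; the full vertex sequence of the walk is `a :: l`. -/
def IsWalk (arc : V → V → Prop) : V → List V → V → Prop
  | a, [], b => a = b
  | a, x :: xs, b => arc a x ∧ IsWalk arc x xs b

/-- The walks `a :: l` (to `b`) and `a' :: m` (to `b'`) are internally vertex-disjoint: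
no internal vertex of one occurs anywhere on the other. -/
def IntDisj (a : V) (l : List V) (a' : V) (m : List V) : Prop :=
  (∀ w ∈ l.dropLast, w ∉ a' :: m) ∧ (∀ w ∈ m.dropLast, w ∉ a :: l)

/-- The triplet `xy|z` is consistent with the digraph `arc`: there are distinct vertices
`u, v` and pairwise internally vertex-disjoint directed paths `u → x`, `u → y`,
`v → u` and `v → z`. -/
def Consistent (arc : V → V → Prop) (x y z : V) : Prop :=
  ∃ (u v : V) (l₁ l₂ l₃ l₄ : List V),
    u ≠ v ∧
    IsWalk arc u l₁ x ∧ IsWalk arc u l₂ y ∧ IsWalk arc v l₃ u ∧ IsWalk arc v l₄ z ∧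
    IntDisj u l₁ u l₂ ∧ IntDisj u l₁ v l₃ ∧ IntDisj u l₁ v l₄ ∧
    IntDisj u l₂ v l₃ ∧ IntDisj u l₂ v l₄ ∧ IntDisj v l₃ v l₄

/-- All of `S` is connected inside `S` in the underlying undirected graph. -/
def ConnWithin (arc : V → V → Prop) (S : Set V) : Prop :=
  ∀ a ∈ S, ∀ b ∈ S,
    Relation.ReflTransGen (fun x y => (arc x y ∨ arc y x) ∧ x ∈ S ∧ y ∈ S) a b

/-- `S` induces a biconnected subgraph: connected with no cut vertex. -/
def Biconn (arc : V → V → Prop) (S : Set V) : Prop :=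
  ConnWithin arc S ∧ ∀ x ∈ S, ConnWithin arc (S \ {x})

/-- A biconnected component: a maximal biconnected subgraph. -/
def IsBlock (arc : V → V → Prop) (S : Set V) : Prop :=
  Biconn arc S ∧ ∀ S', Biconn arc S' → S ⊆ S' → S' = S

/-- A reticulation: a vertex of indegree at least 2. -/
def IsRetic (arc : V → V → Prop) (v : V) : Prop :=
  ∃ a b, a ≠ b ∧ arc a v ∧ arc b v

/-- No vertex has three distinct in-neighbours. -/
def SemiBinary (arc : V → V → Prop) : Prop :=
  ∀ v a b c, arc a v → arc b v → arc c v → a = b ∨ a = c ∨ b = c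

/-- Each biconnected component contains at most one reticulation. -/
def Level1Blocks (arc : V → V → Prop) : Prop :=
  ∀ S, IsBlock arc S → ∀ r₁ r₂, r₁ ∈ S → r₂ ∈ S →
    IsRetic arc r₁ → IsRetic arc r₂ → r₁ = r₂

end Graph

/-- A phylogenetic network on `X`: a single-rooted DAG whose leaves are bijectively
labelled by `X`. -/
structure PhyloNet (X : Type) where
  V : Type
  arc : V → V → Prop
  root : V
  leafOf : X → V
  leafOf_inj : Function.Injective leafOf
  leaf_iff : ∀ v, (∀ w, ¬ arc v w) ↔ ∃ x, v = leafOf x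
  root_no_in : ∀ w, ¬ arc w root
  reach : ∀ v, Relation.ReflTransGen arc root v
  acyclic : ∀ v, ¬ Relation.TransGen arc v v

def PhyloNet.Level1 {X : Type} (N : PhyloNet X) : Prop :=
  SemiBinary N.arc ∧ Level1Blocks N.arc

/-!
Fix a section `σ` of the contraction map `φ` sending the merged vertex to `u`. Because `u` is the
only in-neighbour of `v`, every arc of `N'` lifts to an arc of `N` ending at `σ` of its head; this
makes `N'` acyclic and semi-binary and turns reticulations of `N'` into reticulations of `N` (never
the merged vertex, since `u` is not one). A biconnected set of `N'` lifts to a biconnected set of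
`N`, namely its preimage in which an end of the contracted arc is kept only when it has a neighbour
there; so two reticulations in one block of `N'` lie in one block of `N`.

Walks of `N'` lift to walks of `N` in which the merged vertex becomes `u`, `u v` or `v`, and lifts
of internally disjoint walks stay internally disjoint. The only care is needed when the merged
vertex is one of the two branching vertices of a triplet: it is lifted to `v` when both walks
leaving it start from `v`, and to `u` otherwise, so that at most one lifted walk passes through `v`.
-/

section Walks
variable {V : Type} {r : V → V → Prop}

theorem IsWalk.append {a b c : V} {L M : List V} (h₁ : IsWalk r a L b) (h₂ : IsWalk r b M c) :
    IsWalk r a (L ++ M) c := by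
  induction L generalizing a with
  | nil => cases h₁; exact h₂
  | cons x xs ih => exact ⟨h₁.1, ih h₁.2⟩

theorem IsWalk.ne_nil {a b : V} {L : List V} (h : IsWalk r a L b) (hab : a ≠ b) : L ≠ [] := by
  rintro rfl
  exact hab h

theorem IsWalk.mem_dropLast_or_eq {a b w : V} {L : List V} (h : IsWalk r a L b) (hw : w ∈ L) :
    w ∈ L.dropLast ∨ w = b := by
  induction L generalizing a with
  | nil => simp at hw
  | cons x xs ih =>
    rcases xs with _ | ⟨y, ys⟩
    · exact Or.inr ((List.mem_singleton.1 hw).trans h.2)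
    · rw [List.dropLast_cons_of_ne_nil (List.cons_ne_nil y ys)]
      rcases List.mem_cons.1 hw with rfl | hw
      · exact Or.inl List.mem_cons_self
      · exact (ih h.2 hw).imp_left (List.mem_cons_of_mem _)

theorem IsWalk.not_mem {a b y : V} {L : List V} (h : IsWalk r a L b) (hy : y ∉ L.dropLast)
    (hb : y ≠ b) : y ∉ L := fun hm => (h.mem_dropLast_or_eq hm).elim hy hb

end Walks

section Disjointness
variable {V V' : Type}

theorem IntDisj.symm {a b : V} {L M : List V} (h : IntDisj a L b M) : IntDisj b M a L :=
  ⟨h.2, h.1⟩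

theorem IntDisj.not_mem_left {r : V → V → Prop} {a b c y : V} {L M : List V}
    (hL : IsWalk r a L b) (h : IntDisj a L c M) (hy : y ∈ c :: M) (hb : y ≠ b) : y ∉ L :=
  hL.not_mem (fun hm => h.1 y hm hy) hb

theorem IntDisj.cons_right {a b x : V} {L M : List V} (h : IntDisj a L x M) (hx : x ∉ a :: L)
    (hb : b ∉ L.dropLast) : IntDisj a L b (x :: M) := by
  refine ⟨fun w hw hmem => ?_, fun w hw hmem => ?_⟩
  · rcases List.mem_cons.1 hmem with rfl | hmem
    · exact hb hw
    · exact h.1 w hw hmem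
  · rcases M with _ | ⟨y, ys⟩
    · simp at hw
    · rw [List.dropLast_cons_of_ne_nil (List.cons_ne_nil y ys)] at hw
      rcases List.mem_cons.1 hw with rfl | hw
      · exact hx hmem
      · exact h.2 w hw hmem

theorem IntDisj.concat_right {a b x y : V} {L M : List V} (h : IntDisj a L b M)
    (hM : ∀ w ∈ M, w ∈ M.dropLast ∨ w = y) (hy : y ∉ a :: L) (hx : x ∉ L.dropLast) :
    IntDisj a L b (M ++ [x]) := by
  refine ⟨fun w hw hmem => ?_, fun w hw hmem => ?_⟩
  · rcases List.mem_cons.1 hmem with rfl | hmem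
    · exact h.1 w hw List.mem_cons_self
    · rcases List.mem_append.1 hmem with hmem | hmem
      · exact h.1 w hw (List.mem_cons_of_mem _ hmem)
      · exact hx (List.mem_singleton.1 hmem ▸ hw)
  · rw [List.dropLast_concat] at hw
    rcases hM w hw with hw | rfl
    · exact h.2 w hw hmem
    · exact hy hmem

def LiesOver (f : V → V') (M : List V) (L : List V') : Prop :=
  (∀ w ∈ M, f w ∈ L) ∧ ∀ w ∈ M.dropLast, f w ∈ L.dropLast

theorem LiesOver.nil (f : V → V') (L : List V') : LiesOver f [] L :=
  ⟨fun _ h => absurd h List.not_mem_nil, fun _ h => absurd h List.not_mem_nil⟩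

theorem LiesOver.not_mem {f : V → V'} {M : List V} {L : List V'} (h : LiesOver f M L) {x : V}
    (hx : f x ∉ L) : x ∉ M := fun hm => hx (h.1 x hm)

theorem LiesOver.not_mem_dropLast {f : V → V'} {M : List V} {L : List V'} (h : LiesOver f M L)
    {x : V} (hx : f x ∉ L.dropLast) : x ∉ M.dropLast := fun hm => hx (h.2 x hm)

theorem LiesOver.cons {f : V → V'} {M : List V} {L : List V'} (h : LiesOver f M L) {a : V}
    {x : V'} (hx : f a = x) : LiesOver f (a :: M) (x :: L) := by
  refine ⟨fun w hw => ?_, fun w hw => ?_⟩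
  · rcases List.mem_cons.1 hw with rfl | hw
    · exact hx ▸ List.mem_cons_self
    · exact List.mem_cons_of_mem _ (h.1 w hw)
  · rcases M with _ | ⟨b, M⟩
    · simp at hw
    · have hL : L ≠ [] := List.ne_nil_of_mem (h.1 b List.mem_cons_self)
      rw [List.dropLast_cons_of_ne_nil (List.cons_ne_nil b M)] at hw
      rw [List.dropLast_cons_of_ne_nil hL]
      rcases List.mem_cons.1 hw with rfl | hw
      · exact hx ▸ List.mem_cons_self
      · exact List.mem_cons_of_mem _ (h.2 w hw)

theorem LiesOver.cons_of_map_eq {f : V → V'} {a b : V} {M : List V} {x : V'} {L : List V'}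
    (h : LiesOver f (a :: M) (x :: L)) (hb : f b = x) (hL : L ≠ []) :
    LiesOver f (b :: a :: M) (x :: L) := by
  refine ⟨fun w hw => ?_, fun w hw => ?_⟩
  · rcases List.mem_cons.1 hw with rfl | hw
    · exact hb ▸ List.mem_cons_self
    · exact h.1 w hw
  · rw [List.dropLast_cons_of_ne_nil (List.cons_ne_nil a M)] at hw
    rcases List.mem_cons.1 hw with rfl | hw
    · rw [List.dropLast_cons_of_ne_nil hL]
      exact hb ▸ List.mem_cons_self
    · exact h.2 w hw

theorem IntDisj.of_liesOver (f : V → V') {a b : V} {L M : List V} {a' b' : V'}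
    {L' M' : List V'} (hd : IntDisj a' L' b' M') (ha : f a = a') (hb : f b = b')
    (hL : LiesOver f L L') (hM : LiesOver f M M') : IntDisj a L b M := by
  refine ⟨fun w hw hmem => hd.1 (f w) (hL.2 w hw) ?_, fun w hw hmem => hd.2 (f w) (hM.2 w hw) ?_⟩
  · rcases List.mem_cons.1 hmem with rfl | hmem
    · exact hb ▸ List.mem_cons_self
    · exact List.mem_cons_of_mem _ (hM.1 w hmem)
  · rcases List.mem_cons.1 hmem with rfl | hmem
    · exact ha ▸ List.mem_cons_self
    · exact List.mem_cons_of_mem _ (hL.1 w hmem)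

end Disjointness

section Connectivity
variable {V V' : Type} {arc : V → V → Prop}

/-- `ConnWithin arc S` unfolds to `∀ a ∈ S, ∀ b ∈ S, LinkedIn arc S a b`. -/
def LinkedIn (arc : V → V → Prop) (S : Set V) : V → V → Prop :=
  Relation.ReflTransGen fun x y => (arc x y ∨ arc y x) ∧ x ∈ S ∧ y ∈ S

theorem LinkedIn.single {S : Set V} {a b : V} (h : arc a b ∨ arc b a) (ha : a ∈ S) (hb : b ∈ S) :
    LinkedIn arc S a b :=
  Relation.ReflTransGen.single ⟨h, ha, hb⟩

theorem LinkedIn.symm {S : Set V} {a b : V} (h : LinkedIn arc S a b) : LinkedIn arc S b a := by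
  induction h with
  | refl => exact Relation.ReflTransGen.refl
  | tail _ hbc ih => exact Relation.ReflTransGen.head ⟨hbc.1.symm, hbc.2.2, hbc.2.1⟩ ih

theorem LinkedIn.mono {S T : Set V} (hST : S ⊆ T) {a b : V} (h : LinkedIn arc S a b) :
    LinkedIn arc T a b :=
  Relation.ReflTransGen.mono (fun _ _ h => ⟨h.1, hST h.2.1, hST h.2.2⟩) _ _ h

theorem ConnWithin.of_cover {arc' : V' → V' → Prop} {S' : Set V'} (hS' : ConnWithin arc' S')
    {S : Set V} (r : V' → V)
    (hstep : ∀ x' ∈ S', ∀ y' ∈ S', arc' x' y' → LinkedIn arc S (r x') (r y'))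
    (hcover : ∀ a ∈ S, ∃ a' ∈ S', LinkedIn arc S a (r a')) : ConnWithin arc S := by
  have hlift : ∀ {a' b' : V'}, LinkedIn arc' S' a' b' → LinkedIn arc S (r a') (r b') := by
    intro a' b' h
    induction h with
    | refl => exact Relation.ReflTransGen.refl
    | tail _ hxy ih =>
      obtain ⟨e | e, hx, hy⟩ := hxy
      · exact ih.trans (hstep _ hx _ hy e)
      · exact ih.trans (hstep _ hy _ hx e).symm
  intro a ha b hb
  obtain ⟨a', ha', hla⟩ := hcover a ha
  obtain ⟨b', hb', hlb⟩ := hcover b hb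
  exact (hla.trans (hlift (hS' a' ha' b' hb'))).trans hlb.symm

theorem IsChain.exists_superset_mem {c : Set (Set V)} (hc : IsChain (· ⊆ ·) c) {T₀ : Set V}
    (hT₀ : T₀ ∈ c) {x : V} (hx : x ∈ ⋃₀ c) : ∃ T ∈ c, T₀ ⊆ T ∧ x ∈ T := by
  obtain ⟨T, hT, hxT⟩ := hx
  rcases hc.total hT₀ hT with h | h
  · exact ⟨T, hT, h, hxT⟩
  · exact ⟨T₀, hT₀, subset_rfl, h hxT⟩

theorem Biconn.sUnion {c : Set (Set V)} (hc : IsChain (· ⊆ ·) c) (hbc : ∀ T ∈ c, Biconn arc T) :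
    Biconn arc (⋃₀ c) := by
  constructor
  · rintro a ⟨Ta, hTa, ha⟩ b hb
    obtain ⟨T, hT, hsub, hbT⟩ := hc.exists_superset_mem hTa hb
    exact LinkedIn.mono (Set.subset_sUnion_of_mem hT) ((hbc T hT).1 a (hsub ha) b hbT)
  · rintro x ⟨Tx, hTx, hx⟩ a ⟨ha, hax⟩ b ⟨hb, hbx⟩
    obtain ⟨T₁, hT₁, hsub₁, haT⟩ := hc.exists_superset_mem hTx ha
    obtain ⟨T, hT, hsub, hbT⟩ := hc.exists_superset_mem hT₁ hb
    exact LinkedIn.mono (Set.sdiff_subset_sdiff_left (Set.subset_sUnion_of_mem hT))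
      ((hbc T hT).2 x (hsub (hsub₁ hx)) a ⟨hsub haT, hax⟩ b ⟨hbT, hbx⟩)

theorem Biconn.exists_isBlock {S : Set V} (h : Biconn arc S) : ∃ B, IsBlock arc B ∧ S ⊆ B := by
  obtain ⟨B, hSB, hmax⟩ := zorn_subset_nonempty {T | Biconn arc T ∧ S ⊆ T}
    (fun c hc hchain ⟨T, hT⟩ => ⟨⋃₀ c, ⟨Biconn.sUnion hchain fun T hT => (hc hT).1,
      (hc hT).2.trans (Set.subset_sUnion_of_mem hT)⟩, fun _ => Set.subset_sUnion_of_mem⟩)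
    S ⟨h, subset_rfl⟩
  refine ⟨B, ⟨hmax.1.1, fun S' hS' hBS' => ?_⟩, hSB⟩
  exact le_antisymm (hmax.2 ⟨hS', hSB.trans hBS'⟩ hBS') hBS'

end Connectivity

/-- `σ` is a section of the contraction map `φ` that never picks `v`, so it sends the merged
vertex to `u`. -/
structure IsArcContraction {V V' : Type} (arc : V → V → Prop) (arc' : V' → V' → Prop)
    (φ : V → V') (σ : V' → V) (u v : V) : Prop where
  arc_uv : arc u v
  ne : u ≠ v
  map_eq : φ u = φ v
  eq_or_of_map_eq : ∀ a b, φ a = φ b → a = b ∨ ((a = u ∨ a = v) ∧ (b = u ∨ b = v))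
  arc'_iff : ∀ a' b', arc' a' b' ↔ ∃ a b, φ a = a' ∧ φ b = b' ∧ arc a b ∧ φ a ≠ φ b
  map_lift : ∀ y', φ (σ y') = y'
  lift_ne : ∀ y', σ y' ≠ v
  not_isRetic_u : ¬ IsRetic arc u
  not_isRetic_v : ¬ IsRetic arc v

theorem Function.Surjective.exists_rightInverse_ne {V V' : Type} {φ : V → V'}
    (hφ : Function.Surjective φ) {u v : V} (huv : u ≠ v) (hmap : φ u = φ v) :
    ∃ σ : V' → V, (∀ y', φ (σ y') = y') ∧ ∀ y', σ y' ≠ v := by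
  classical
  refine ⟨fun y' => if y' = φ u then u else Function.surjInv hφ y', fun y' => ?_, fun y' => ?_⟩
  · dsimp only
    split_ifs with h
    · exact h.symm
    · exact Function.surjInv_eq hφ y'
  · dsimp only
    split_ifs with h
    · exact huv
    · rintro hv
      exact h (by rw [hmap, ← hv, Function.surjInv_eq hφ y'])

namespace IsArcContraction
variable {V V' : Type} {arc : V → V → Prop} {arc' : V' → V' → Prop} {φ : V → V'} {σ : V' → V}
  {u v : V}
variable (C : IsArcContraction arc arc' φ σ u v)
include C

theorem lift_map {a : V} (ha : a ≠ v) : σ (φ a) = a := by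
  rcases C.eq_or_of_map_eq _ _ (C.map_lift (φ a)) with h | ⟨hu | hv, ha' | ha'⟩
  · exact h
  · rw [hu, ha']
  · exact absurd ha' ha
  · exact absurd hv (C.lift_ne _)
  · exact absurd hv (C.lift_ne _)

theorem lift_map_u : σ (φ u) = u := C.lift_map C.ne

theorem eq_or_eq_of_map_eq_map_u {a : V} (h : φ a = φ u) : a = u ∨ a = v := by
  rcases C.eq_or_of_map_eq a u h with rfl | ⟨ha, -⟩
  · exact Or.inl rfl
  · exact ha

theorem lift_ne_u {y' : V'} (hy : y' ≠ φ u) : σ y' ≠ u := fun h => hy (h ▸ (C.map_lift y').symm)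

theorem eq_u_of_arc_v {a : V} (h : arc a v) : a = u := by
  by_contra hne
  exact C.not_isRetic_v ⟨a, u, hne, h, C.arc_uv⟩

theorem arc'_of_arc {a b : V} (h : arc a b) (hne : φ a ≠ φ b) : arc' (φ a) (φ b) :=
  (C.arc'_iff _ _).2 ⟨a, b, rfl, rfl, h, hne⟩

theorem ne_of_arc' {a' b' : V'} (h : arc' a' b') : a' ≠ b' := by
  obtain ⟨a, b, rfl, rfl, -, hne⟩ := (C.arc'_iff _ _).1 h
  exact hne

/-- Arcs into the merged vertex come from arcs into `u`, since `u` is the only in-neighbour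
of `v`. -/
theorem exists_arc_lift {a' b' : V'} (h : arc' a' b') : ∃ a, φ a = a' ∧ arc a (σ b') := by
  obtain ⟨a, b, rfl, rfl, hab, hne⟩ := (C.arc'_iff _ _).1 h
  have hb : b ≠ v := by
    rintro rfl
    exact hne (by rw [C.eq_u_of_arc_v hab, C.map_eq])
  exact ⟨a, rfl, (C.lift_map hb).symm ▸ hab⟩

theorem arc_lift {a' b' : V'} (h : arc' a' b') {a₀ : V} (ha : φ a₀ = a') (hv : a₀ ≠ v) :
    arc a₀ (σ b') ∨ (a₀ = u ∧ arc v (σ b')) := by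
  obtain ⟨a, rfl, hab⟩ := C.exists_arc_lift h
  rcases C.eq_or_of_map_eq a₀ a ha with rfl | ⟨ha₀ | ha₀, rfl | rfl⟩
  · exact Or.inl hab
  · exact Or.inl (ha₀ ▸ hab)
  · exact Or.inr ⟨ha₀, hab⟩
  · exact absurd ha₀ hv
  · exact absurd ha₀ hv

theorem arc_lift_of_ne {a' b' : V'} (h : arc' a' b') (ha : a' ≠ φ u) : arc (σ a') (σ b') :=
  (C.arc_lift h (C.map_lift a') (C.lift_ne a')).resolve_right fun h' => C.lift_ne_u ha h'.1

theorem acyclic (hacyc : ∀ w, ¬ Relation.TransGen arc w w) :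
    ∀ w', ¬ Relation.TransGen arc' w' w' := by
  have hstep : ∀ a' b', arc' a' b' → Relation.TransGen arc (σ a') (σ b') := by
    intro a' b' h
    rcases C.arc_lift h (C.map_lift a') (C.lift_ne a') with h | ⟨hu, h⟩
    · exact Relation.TransGen.single h
    · exact hu ▸ Relation.TransGen.head C.arc_uv (Relation.TransGen.single h)
  exact fun w' h => hacyc (σ w') (Relation.TransGen.lift' σ hstep _ _ h)

theorem reflTransGen_map {a b : V} (h : Relation.ReflTransGen arc a b) :
    Relation.ReflTransGen arc' (φ a) (φ b) := by
  refine Relation.ReflTransGen.lift' φ (fun a b hab => ?_) _ _ h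
  show Relation.ReflTransGen arc' (φ a) (φ b)
  by_cases he : φ a = φ b
  · exact he ▸ Relation.ReflTransGen.refl
  · exact Relation.ReflTransGen.single (C.arc'_of_arc hab he)

theorem semiBinary (h : SemiBinary arc) : SemiBinary arc' := by
  intro w' a' b' c' ha' hb' hc'
  obtain ⟨a, rfl, ha⟩ := C.exists_arc_lift ha'
  obtain ⟨b, rfl, hb⟩ := C.exists_arc_lift hb'
  obtain ⟨c, rfl, hc⟩ := C.exists_arc_lift hc'
  rcases h _ a b c ha hb hc with rfl | rfl | rfl <;> simp

theorem isRetic_lift {w' : V'} (h : IsRetic arc' w') : IsRetic arc (σ w') := by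
  obtain ⟨a', b', hne, ha', hb'⟩ := h
  obtain ⟨a, rfl, ha⟩ := C.exists_arc_lift ha'
  obtain ⟨b, rfl, hb⟩ := C.exists_arc_lift hb'
  exact ⟨a, b, fun h => hne (congrArg φ h), ha, hb⟩

theorem ne_of_isRetic {w' : V'} (h : IsRetic arc' w') : w' ≠ φ u := by
  rintro rfl
  exact C.not_isRetic_u (C.lift_map_u ▸ C.isRetic_lift h)

end IsArcContraction

section BlockLift
variable {V V' : Type}

def overCore (φ : V → V') (u v : V) (S' : Set V') : Set V := {w | φ w ∈ S' ∧ w ≠ u ∧ w ≠ v}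

/-- An end of the contracted arc is kept only if it has a neighbour in the core: a pendant end
would turn the other end into a cut vertex. -/
def overEnds (arc : V → V → Prop) (φ : V → V') (u v : V) (S' : Set V') : Set V :=
  {x | (x = u ∨ x = v) ∧ φ u ∈ S' ∧ ∃ w ∈ overCore φ u v S', arc x w ∨ arc w x}

def blockLift (arc : V → V → Prop) (φ : V → V') (u v : V) (S' : Set V') : Set V :=
  overCore φ u v S' ∪ overEnds arc φ u v S'

theorem not_mem_overCore_of_mem_overEnds {arc : V → V → Prop} {φ : V → V'} {u v : V}
    {S' : Set V'} {x : V} (hx : x ∈ overEnds arc φ u v S') : x ∉ overCore φ u v S' :=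
  fun h => hx.1.elim h.2.1 h.2.2

end BlockLift

namespace IsArcContraction
variable {V V' : Type} {arc : V → V → Prop} {arc' : V' → V' → Prop} {φ : V → V'} {σ : V' → V}
  {u v : V} {S' : Set V'}
variable (C : IsArcContraction arc arc' φ σ u v)
include C

theorem lift_mem_overCore {y' : V'} (hy : y' ∈ S') (hm : y' ≠ φ u) : σ y' ∈ overCore φ u v S' :=
  ⟨(C.map_lift y').symm ▸ hy, C.lift_ne_u hm, C.lift_ne y'⟩

theorem lift_map_of_mem_overCore {w : V} (hw : w ∈ overCore φ u v S') : σ (φ w) = w :=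
  C.lift_map hw.2.2

theorem map_ne_of_mem_overCore {w : V} (hw : w ∈ overCore φ u v S') : φ w ≠ φ u :=
  fun h => (C.eq_or_eq_of_map_eq_map_u h).elim hw.2.1 hw.2.2

theorem linkedIn_of_mem_overEnds {T : Set V} (hT : overEnds arc φ u v S' ⊆ T) {x y : V}
    (hx : x ∈ overEnds arc φ u v S') (hy : y ∈ overEnds arc φ u v S') : LinkedIn arc T x y := by
  rcases hx.1 with rfl | rfl <;> rcases hy.1 with rfl | rfl
  · exact Relation.ReflTransGen.refl
  · exact LinkedIn.single (Or.inl C.arc_uv) (hT hx) (hT hy)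
  · exact LinkedIn.single (Or.inr C.arc_uv) (hT hx) (hT hy)
  · exact Relation.ReflTransGen.refl

theorem exists_mem_overEnds_adj {y' : V'} (hy : y' ∈ S') (hm : y' ≠ φ u) (hmS : φ u ∈ S')
    (h : arc' y' (φ u) ∨ arc' (φ u) y') :
    ∃ x ∈ overEnds arc φ u v S', arc x (σ y') ∨ arc (σ y') x := by
  have hy' := C.lift_mem_overCore hy hm
  rcases h with h | h
  · have h := C.lift_map_u ▸ C.arc_lift_of_ne h hm
    exact ⟨u, ⟨Or.inl rfl, hmS, σ y', hy', Or.inr h⟩, Or.inr h⟩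
  · rcases C.arc_lift h rfl C.ne with h | ⟨-, h⟩
    · exact ⟨u, ⟨Or.inl rfl, hmS, σ y', hy', Or.inl h⟩, Or.inl h⟩
    · exact ⟨v, ⟨Or.inr rfl, hmS, σ y', hy', Or.inl h⟩, Or.inl h⟩

/-- The merged vertex is represented by a fixed kept end of the arc. -/
theorem connWithin_blockLift_diff {R : Set V} (hR : R ⊆ overCore φ u v S')
    (hS' : ConnWithin arc' (S' \ φ '' R)) : ConnWithin arc (blockLift arc φ u v S' \ R) := by
  classical
  set T := blockLift arc φ u v S' \ R
  have hends : overEnds arc φ u v S' ⊆ T :=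
    fun x hx => ⟨Or.inr hx, fun h => not_mem_overCore_of_mem_overEnds hx (hR h)⟩
  have hlift : ∀ y' ∈ S' \ φ '' R, y' ≠ φ u → σ y' ∈ T := fun y' hy hm =>
    ⟨Or.inl (C.lift_mem_overCore hy.1 hm), fun h => hy.2 ⟨_, h, C.map_lift y'⟩⟩
  obtain ⟨anchor, hanchor⟩ : ∃ c, ∀ x ∈ overEnds arc φ u v S', c ∈ overEnds arc φ u v S' := by
    by_cases h : (overEnds arc φ u v S').Nonempty
    · exact ⟨h.some, fun _ _ => h.some_mem⟩
    · exact ⟨u, fun x hx => absurd ⟨x, hx⟩ h⟩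
  have hadj : ∀ y' ∈ S' \ φ '' R, y' ≠ φ u → φ u ∈ S' → (arc' y' (φ u) ∨ arc' (φ u) y') →
      LinkedIn arc T (σ y') anchor := by
    intro y' hy hm hmS e
    obtain ⟨x, hx, hxy⟩ := C.exists_mem_overEnds_adj hy.1 hm hmS e
    exact (LinkedIn.single hxy.symm (hlift y' hy hm) (hends hx)).trans
      (C.linkedIn_of_mem_overEnds hends hx (hanchor x hx))
  refine ConnWithin.of_cover hS' (fun y' => if y' = φ u then anchor else σ y') ?_ ?_
  · intro x' hx y' hy e
    by_cases hxm : x' = φ u <;> by_cases hym : y' = φ u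
    · exact absurd (hxm.trans hym.symm) (C.ne_of_arc' e)
    · subst hxm
      simp only [if_neg hym]
      exact (hadj y' hy hym hx.1 (Or.inr e)).symm
    · subst hym
      simp only [if_neg hxm]
      exact hadj x' hx hxm hy.1 (Or.inl e)
    · simp only [if_neg hxm, if_neg hym]
      exact LinkedIn.single (Or.inl (C.arc_lift_of_ne e hxm)) (hlift x' hx hxm) (hlift y' hy hym)
  · rintro a ⟨ha | ha, haR⟩
    · refine ⟨φ a, ⟨ha.1, fun ⟨b, hb, hab⟩ => haR ?_⟩, ?_⟩
      · rwa [← C.lift_map_of_mem_overCore ha, ← hab, C.lift_map_of_mem_overCore (hR hb)]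
      · simp only [if_neg (C.map_ne_of_mem_overCore ha), C.lift_map_of_mem_overCore ha]
        exact Relation.ReflTransGen.refl
    · refine ⟨φ u, ⟨ha.2.1, fun ⟨b, hb, hbu⟩ => C.map_ne_of_mem_overCore (hR hb) hbu⟩, ?_⟩
      simp only
      exact C.linkedIn_of_mem_overEnds hends ha (hanchor a ha)

theorem connWithin_blockLift_diff_end {x : V} (hx : x ∈ overEnds arc φ u v S')
    (hS' : ConnWithin arc' (S' \ {φ u})) : ConnWithin arc (blockLift arc φ u v S' \ {x}) := by
  have hcore : ∀ {w}, w ∈ overCore φ u v S' → w ∈ blockLift arc φ u v S' \ {x} :=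
    fun hw => ⟨Or.inl hw, fun h => not_mem_overCore_of_mem_overEnds hx (h ▸ hw)⟩
  have hlift : ∀ y' ∈ S' \ {φ u}, σ y' ∈ overCore φ u v S' :=
    fun y' hy => C.lift_mem_overCore hy.1 hy.2
  refine ConnWithin.of_cover hS' σ (fun x' hx' y' hy' e => LinkedIn.single
    (Or.inl (C.arc_lift_of_ne e hx'.2)) (hcore (hlift x' hx')) (hcore (hlift y' hy'))) ?_
  rintro a ⟨ha | ha, hax⟩
  · refine ⟨φ a, ⟨ha.1, C.map_ne_of_mem_overCore ha⟩, ?_⟩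
    rw [C.lift_map_of_mem_overCore ha]
    exact Relation.ReflTransGen.refl
  · obtain ⟨w, hw, hadj⟩ := ha.2.2
    refine ⟨φ w, ⟨hw.1, C.map_ne_of_mem_overCore hw⟩, ?_⟩
    rw [C.lift_map_of_mem_overCore hw]
    exact LinkedIn.single hadj ⟨Or.inr ha, hax⟩ (hcore hw)

theorem biconn_blockLift (hS' : Biconn arc' S') : Biconn arc (blockLift arc φ u v S') := by
  refine ⟨?_, fun x hx => ?_⟩
  · simpa using C.connWithin_blockLift_diff (Set.empty_subset _) (by simpa using hS'.1)
  · rcases hx with hx | hx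
    · exact C.connWithin_blockLift_diff (Set.singleton_subset_iff.2 hx)
        (by simpa using hS'.2 _ hx.1)
    · exact C.connWithin_blockLift_diff_end hx (hS'.2 _ hx.2.1)

theorem level1Blocks (h : Level1Blocks arc) : Level1Blocks arc' := by
  intro S' hS' r₁ r₂ h₁ h₂ hr₁ hr₂
  obtain ⟨B, hB, hsub⟩ := (C.biconn_blockLift hS'.1).exists_isBlock
  have hmem : ∀ r ∈ S', IsRetic arc' r → σ r ∈ B :=
    fun r hr hret => hsub (Or.inl (C.lift_mem_overCore hr (C.ne_of_isRetic hret)))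
  have := h B hB _ _ (hmem r₁ h₁ hr₁) (hmem r₂ h₂ hr₂) (C.isRetic_lift hr₁) (C.isRetic_lift hr₂)
  rw [← C.map_lift r₁, ← C.map_lift r₂, this]

end IsArcContraction

section Triplets
variable {V : Type}

structure IsTripletWitness (arc : V → V → Prop) (x y z p q : V) (l₁ l₂ l₃ l₄ : List V) :
    Prop where
  ne : p ≠ q
  walk₁ : IsWalk arc p l₁ x
  walk₂ : IsWalk arc p l₂ y
  walk₃ : IsWalk arc q l₃ p
  walk₄ : IsWalk arc q l₄ z
  disj₁₂ : IntDisj p l₁ p l₂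
  disj₁₃ : IntDisj p l₁ q l₃
  disj₁₄ : IntDisj p l₁ q l₄
  disj₂₃ : IntDisj p l₂ q l₃
  disj₂₄ : IntDisj p l₂ q l₄
  disj₃₄ : IntDisj q l₃ q l₄

theorem Consistent.exists_isTripletWitness {arc : V → V → Prop} {x y z : V}
    (h : Consistent arc x y z) : ∃ p q l₁ l₂ l₃ l₄, IsTripletWitness arc x y z p q l₁ l₂ l₃ l₄ :=
  let ⟨p, q, l₁, l₂, l₃, l₄, h₀, h₁, h₂, h₃, h₄, d₁₂, d₁₃, d₁₄, d₂₃, d₂₄, d₃₄⟩ := h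
  ⟨p, q, l₁, l₂, l₃, l₄, ⟨h₀, h₁, h₂, h₃, h₄, d₁₂, d₁₃, d₁₄, d₂₃, d₂₄, d₃₄⟩⟩

open Classical in
noncomputable def startAtU (u v t : V) (M : List V) : List V := if t = u then M else v :: M

theorem startAtU_self (u v : V) (M : List V) : startAtU u v u M = M := if_pos rfl

theorem startAtU_of_ne {u v : V} (huv : u ≠ v) (M : List V) : startAtU u v v M = v :: M :=
  if_neg huv.symm

theorem IntDisj.startAtU_right {u v s t : V} {Q M : List V} (h : IntDisj s Q t M) (huv : u ≠ v)
    (ht : t = u ∨ t = v) (hv : v ∉ s :: Q) (hu : u ∉ Q.dropLast) :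
    IntDisj s Q u (startAtU u v t M) := by
  rcases ht with rfl | rfl
  · rwa [startAtU_self]
  · rw [startAtU_of_ne huv]
    exact h.cons_right hv hu

theorem IntDisj.startAtU_startAtU {u v t t' : V} {M M' : List V} (h : IntDisj t M t' M')
    (huv : u ≠ v) (ht : t = u ∨ t = v) (ht' : t' = u ∨ t' = v) (hvv : ¬ (t = v ∧ t' = v))
    (hM : u ∉ M ∧ v ∉ M) (hM' : u ∉ M' ∧ v ∉ M') :
    IntDisj u (startAtU u v t M) u (startAtU u v t' M') := by
  rcases ht with rfl | rfl
  · rw [startAtU_self]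
    exact h.startAtU_right huv ht' (List.not_mem_cons_of_ne_of_not_mem huv.symm hM.2)
      (mt List.mem_of_mem_dropLast hM.1)
  · obtain rfl : t' = u := ht'.resolve_right fun h => hvv ⟨rfl, h⟩
    rw [startAtU_self]
    exact (h.symm.startAtU_right huv (Or.inr rfl)
      (List.not_mem_cons_of_ne_of_not_mem huv.symm hM'.2)
      (mt List.mem_of_mem_dropLast hM'.1)).symm

end Triplets

namespace IsArcContraction
variable {V V' : Type} {arc : V → V → Prop} {arc' : V' → V' → Prop} {φ : V → V'} {σ : V' → V}
  {u v : V}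
variable (C : IsArcContraction arc arc' φ σ u v)
include C

/-- The merged vertex lifts to `u`, followed by `v` when the walk leaves it through an arc
out of `v`. -/
theorem exists_walk_lift {a' b' : V'} {L : List V'} (h : IsWalk arc' a' L b') {a₀ : V}
    (ha : φ a₀ = a') (hv : a₀ ≠ v) :
    ∃ t M, (t = a₀ ∨ (a₀ = u ∧ t = v)) ∧ IsWalk arc t M (σ b') ∧ LiesOver φ M L := by
  induction L generalizing a' a₀ with
  | nil =>
    cases h
    exact ⟨a₀, [], Or.inl rfl, (ha ▸ C.lift_map hv).symm, LiesOver.nil φ []⟩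
  | cons x xs ih =>
    obtain ⟨t, M, ht, hM, hl⟩ := ih h.2 (C.map_lift x) (C.lift_ne x)
    obtain ⟨N, hN, hlN⟩ : ∃ N, IsWalk arc (σ x) N (σ b') ∧ LiesOver φ (σ x :: N) (x :: xs) := by
      rcases ht with rfl | ⟨hxu, htv⟩
      · exact ⟨M, hM, hl.cons (C.map_lift x)⟩
      · rw [htv] at hM
        obtain ⟨w, hw⟩ := List.exists_mem_of_ne_nil M (hM.ne_nil fun h => C.lift_ne b' h.symm)
        have hvx : φ v = x := by rw [← C.map_eq, ← hxu, C.map_lift]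
        exact ⟨v :: M, hxu ▸ ⟨C.arc_uv, hM⟩,
          (hl.cons hvx).cons_of_map_eq (C.map_lift x) (List.ne_nil_of_mem (hl.1 w hw))⟩
    rcases C.arc_lift h.1 ha hv with hx | ⟨hu, hx⟩
    · exact ⟨a₀, σ x :: N, Or.inl rfl, ⟨hx, hN⟩, hlN⟩
    · exact ⟨v, σ x :: N, Or.inr ⟨hu, rfl⟩, ⟨hx, hN⟩, hlN⟩

theorem exists_walk_lift_of_ne {a' b' : V'} {L : List V'} (h : IsWalk arc' a' L b')
    (ha : a' ≠ φ u) : ∃ M, IsWalk arc (σ a') M (σ b') ∧ LiesOver φ M L := by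
  obtain ⟨t, M, rfl | ⟨hu, -⟩, hM, hl⟩ := C.exists_walk_lift h (C.map_lift a') (C.lift_ne a')
  · exact ⟨M, hM, hl⟩
  · exact absurd hu (C.lift_ne_u ha)

theorem exists_walk_lift_of_eq {b' : V'} {L : List V'} (h : IsWalk arc' (φ u) L b') :
    ∃ t M, (t = u ∨ t = v) ∧ IsWalk arc t M (σ b') ∧ LiesOver φ M L := by
  obtain ⟨t, M, ht, hM, hl⟩ := C.exists_walk_lift h rfl C.ne
  exact ⟨t, M, ht.imp_right And.right, hM, hl⟩

theorem walk_startAtU {t e : V} {M : List V} (ht : t = u ∨ t = v) (h : IsWalk arc t M e) :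
    IsWalk arc u (startAtU u v t M) e := by
  rcases ht with rfl | rfl
  · rwa [startAtU_self]
  · rw [startAtU_of_ne C.ne]
    exact ⟨C.arc_uv, h⟩

theorem map_eq_of_eq_or_eq {t : V} (ht : t = u ∨ t = v) : φ t = φ u := by
  rcases ht with rfl | rfl
  · rfl
  · exact C.map_eq.symm

theorem not_mem_of_liesOver {M : List V} {L : List V'} (h : LiesOver φ M L) (hm : φ u ∉ L) :
    u ∉ M ∧ v ∉ M :=
  ⟨h.not_mem hm, h.not_mem (C.map_eq ▸ hm)⟩

theorem consistent_of_isTripletWitness_of_ne {x' y' z' p' q' : V'} {l₁ l₂ l₃ l₄ : List V'}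
    (hw : IsTripletWitness arc' x' y' z' p' q' l₁ l₂ l₃ l₄) (hp : p' ≠ φ u) (hq : q' ≠ φ u) :
    Consistent arc (σ x') (σ y') (σ z') := by
  obtain ⟨M₁, w₁, h₁⟩ := C.exists_walk_lift_of_ne hw.walk₁ hp
  obtain ⟨M₂, w₂, h₂⟩ := C.exists_walk_lift_of_ne hw.walk₂ hp
  obtain ⟨M₃, w₃, h₃⟩ := C.exists_walk_lift_of_ne hw.walk₃ hq
  obtain ⟨M₄, w₄, h₄⟩ := C.exists_walk_lift_of_ne hw.walk₄ hq
  have hp' := C.map_lift p'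
  have hq' := C.map_lift q'
  exact ⟨σ p', σ q', M₁, M₂, M₃, M₄, fun h => hw.ne (by rw [← hp', h, hq']), w₁, w₂, w₃, w₄,
    hw.disj₁₂.of_liesOver φ hp' hp' h₁ h₂, hw.disj₁₃.of_liesOver φ hp' hq' h₁ h₃,
    hw.disj₁₄.of_liesOver φ hp' hq' h₁ h₄, hw.disj₂₃.of_liesOver φ hp' hq' h₂ h₃,
    hw.disj₂₄.of_liesOver φ hp' hq' h₂ h₄, hw.disj₃₄.of_liesOver φ hq' hq' h₃ h₄⟩

/-- The lower vertex of the triplet is the merged one: it is lifted to `v` if both of its walks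
leave from `v`, and to `u` otherwise. -/
theorem consistent_of_isTripletWitness_lower {x' y' z' p' : V'} {l₁ l₂ l₃ l₄ : List V'}
    (hw : IsTripletWitness arc' x' y' z' p' (φ u) l₁ l₂ l₃ l₄) (hx : x' ≠ φ u) (hy : y' ≠ φ u)
    (hz : z' ≠ φ u) : Consistent arc (σ x') (σ y') (σ z') := by
  have hp : p' ≠ φ u := hw.ne
  obtain ⟨M₁, w₁, h₁⟩ := C.exists_walk_lift_of_ne hw.walk₁ hp
  obtain ⟨M₂, w₂, h₂⟩ := C.exists_walk_lift_of_ne hw.walk₂ hp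
  obtain ⟨t₃, M₃, ht₃, w₃, h₃⟩ := C.exists_walk_lift_of_eq hw.walk₃
  obtain ⟨t₄, M₄, ht₄, w₄, h₄⟩ := C.exists_walk_lift_of_eq hw.walk₄
  have n₁ := C.not_mem_of_liesOver h₁
    (hw.disj₁₃.not_mem_left hw.walk₁ List.mem_cons_self hx.symm)
  have n₂ := C.not_mem_of_liesOver h₂
    (hw.disj₂₃.not_mem_left hw.walk₂ List.mem_cons_self hy.symm)
  have n₃ := C.not_mem_of_liesOver h₃
    (hw.disj₃₄.not_mem_left hw.walk₃ List.mem_cons_self hp.symm)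
  have n₄ := C.not_mem_of_liesOver h₄
    (hw.disj₃₄.symm.not_mem_left hw.walk₄ List.mem_cons_self hz.symm)
  have hp' := C.map_lift p'
  have ht₃' := C.map_eq_of_eq_or_eq ht₃
  have ht₄' := C.map_eq_of_eq_or_eq ht₄
  by_cases hvv : t₃ = v ∧ t₄ = v
  · have hv := C.map_eq.symm
    exact ⟨σ p', v, M₁, M₂, M₃, M₄, C.lift_ne p', w₁, w₂, hvv.1 ▸ w₃, hvv.2 ▸ w₄,
      hw.disj₁₂.of_liesOver φ hp' hp' h₁ h₂, hw.disj₁₃.of_liesOver φ hp' hv h₁ h₃,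
      hw.disj₁₄.of_liesOver φ hp' hv h₁ h₄, hw.disj₂₃.of_liesOver φ hp' hv h₂ h₃,
      hw.disj₂₄.of_liesOver φ hp' hv h₂ h₄, hw.disj₃₄.of_liesOver φ hv hv h₃ h₄⟩
  have hv₁ : v ∉ σ p' :: M₁ := List.not_mem_cons_of_ne_of_not_mem (C.lift_ne p').symm n₁.2
  have hv₂ : v ∉ σ p' :: M₂ := List.not_mem_cons_of_ne_of_not_mem (C.lift_ne p').symm n₂.2
  have hu₁ : u ∉ M₁.dropLast := mt List.mem_of_mem_dropLast n₁.1
  have hu₂ : u ∉ M₂.dropLast := mt List.mem_of_mem_dropLast n₂.1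
  exact ⟨σ p', u, M₁, M₂, startAtU u v t₃ M₃, startAtU u v t₄ M₄, C.lift_ne_u hp, w₁, w₂,
    C.walk_startAtU ht₃ w₃, C.walk_startAtU ht₄ w₄,
    hw.disj₁₂.of_liesOver φ hp' hp' h₁ h₂,
    (hw.disj₁₃.of_liesOver φ hp' ht₃' h₁ h₃).startAtU_right C.ne ht₃ hv₁ hu₁,
    (hw.disj₁₄.of_liesOver φ hp' ht₄' h₁ h₄).startAtU_right C.ne ht₄ hv₁ hu₁,
    (hw.disj₂₃.of_liesOver φ hp' ht₃' h₂ h₃).startAtU_right C.ne ht₃ hv₂ hu₂,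
    (hw.disj₂₄.of_liesOver φ hp' ht₄' h₂ h₄).startAtU_right C.ne ht₄ hv₂ hu₂,
    (hw.disj₃₄.of_liesOver φ ht₃' ht₄' h₃ h₄).startAtU_startAtU C.ne ht₃ ht₄ hvv n₃ n₄⟩

/-- The upper vertex of the triplet is the merged one: it is lifted to `v` if both of its
out-walks leave from `v`, the walk into it being extended along `u → v`, and to `u` otherwise. -/
theorem consistent_of_isTripletWitness_upper {x' y' z' q' : V'} {l₁ l₂ l₃ l₄ : List V'}
    (hw : IsTripletWitness arc' x' y' z' (φ u) q' l₁ l₂ l₃ l₄) (hx : x' ≠ φ u) (hy : y' ≠ φ u)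
    (hz : z' ≠ φ u) : Consistent arc (σ x') (σ y') (σ z') := by
  have hq : q' ≠ φ u := hw.ne.symm
  obtain ⟨t₁, M₁, ht₁, w₁, h₁⟩ := C.exists_walk_lift_of_eq hw.walk₁
  obtain ⟨t₂, M₂, ht₂, w₂, h₂⟩ := C.exists_walk_lift_of_eq hw.walk₂
  obtain ⟨M₃, w₃, h₃⟩ := C.exists_walk_lift_of_ne hw.walk₃ hq
  obtain ⟨M₄, w₄, h₄⟩ := C.exists_walk_lift_of_ne hw.walk₄ hq
  rw [C.lift_map_u] at w₃
  have n₁ := C.not_mem_of_liesOver h₁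
    (hw.disj₁₂.not_mem_left hw.walk₁ List.mem_cons_self hx.symm)
  have n₂ := C.not_mem_of_liesOver h₂
    (hw.disj₁₂.symm.not_mem_left hw.walk₂ List.mem_cons_self hy.symm)
  have n₄ := C.not_mem_of_liesOver h₄
    (hw.disj₁₄.symm.not_mem_left hw.walk₄ List.mem_cons_self hz.symm)
  have hm₃ : φ u ∉ l₃.dropLast := fun h => hw.disj₁₃.2 _ h List.mem_cons_self
  have hu₃ : u ∉ M₃.dropLast := h₃.not_mem_dropLast hm₃
  have hv₃ : v ∉ M₃ := fun h => (w₃.mem_dropLast_or_eq h).elim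
    (h₃.not_mem_dropLast (C.map_eq ▸ hm₃)) C.ne.symm
  have hq' := C.map_lift q'
  by_cases hvv : t₁ = v ∧ t₂ = v
  · have hv := C.map_eq.symm
    have hM₃ : ∀ w ∈ M₃, w ∈ M₃.dropLast ∨ w = u := fun w h => w₃.mem_dropLast_or_eq h
    have hu₁ : u ∉ v :: M₁ := List.not_mem_cons_of_ne_of_not_mem C.ne n₁.1
    have hu₂ : u ∉ v :: M₂ := List.not_mem_cons_of_ne_of_not_mem C.ne n₂.1
    have hu₄ : u ∉ σ q' :: M₄ := List.not_mem_cons_of_ne_of_not_mem (C.lift_ne_u hq).symm n₄.1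
    exact ⟨v, σ q', M₁, M₂, M₃ ++ [v], M₄, (C.lift_ne q').symm, hvv.1 ▸ w₁, hvv.2 ▸ w₂,
      w₃.append ⟨C.arc_uv, rfl⟩, w₄,
      hw.disj₁₂.of_liesOver φ hv hv h₁ h₂,
      (hw.disj₁₃.of_liesOver φ hv hq' h₁ h₃).concat_right hM₃ hu₁
        (mt List.mem_of_mem_dropLast n₁.2),
      hw.disj₁₄.of_liesOver φ hv hq' h₁ h₄,
      (hw.disj₂₃.of_liesOver φ hv hq' h₂ h₃).concat_right hM₃ hu₂
        (mt List.mem_of_mem_dropLast n₂.2),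
      hw.disj₂₄.of_liesOver φ hv hq' h₂ h₄,
      ((hw.disj₃₄.of_liesOver φ hq' hq' h₃ h₄).symm.concat_right hM₃ hu₄
        (mt List.mem_of_mem_dropLast n₄.2)).symm⟩
  have ht₁' := C.map_eq_of_eq_or_eq ht₁
  have ht₂' := C.map_eq_of_eq_or_eq ht₂
  have hv₃' : v ∉ σ q' :: M₃ := List.not_mem_cons_of_ne_of_not_mem (C.lift_ne q').symm hv₃
  have hv₄ : v ∉ σ q' :: M₄ := List.not_mem_cons_of_ne_of_not_mem (C.lift_ne q').symm n₄.2
  have hu₄ : u ∉ M₄.dropLast := mt List.mem_of_mem_dropLast n₄.1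
  exact ⟨u, σ q', startAtU u v t₁ M₁, startAtU u v t₂ M₂, M₃, M₄, (C.lift_ne_u hq).symm,
    C.walk_startAtU ht₁ w₁, C.walk_startAtU ht₂ w₂, w₃, w₄,
    (hw.disj₁₂.of_liesOver φ ht₁' ht₂' h₁ h₂).startAtU_startAtU C.ne ht₁ ht₂ hvv n₁ n₂,
    ((hw.disj₁₃.of_liesOver φ ht₁' hq' h₁ h₃).symm.startAtU_right C.ne ht₁ hv₃' hu₃).symm,
    ((hw.disj₁₄.of_liesOver φ ht₁' hq' h₁ h₄).symm.startAtU_right C.ne ht₁ hv₄ hu₄).symm,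
    ((hw.disj₂₃.of_liesOver φ ht₂' hq' h₂ h₃).symm.startAtU_right C.ne ht₂ hv₃' hu₃).symm,
    ((hw.disj₂₄.of_liesOver φ ht₂' hq' h₂ h₄).symm.startAtU_right C.ne ht₂ hv₄ hu₄).symm,
    hw.disj₃₄.of_liesOver φ hq' hq' h₃ h₄⟩

theorem consistent_lift {x' y' z' : V'} (h : Consistent arc' x' y' z') (hx : x' ≠ φ u)
    (hy : y' ≠ φ u) (hz : z' ≠ φ u) : Consistent arc (σ x') (σ y') (σ z') := by
  obtain ⟨p', q', l₁, l₂, l₃, l₄, hw⟩ := h.exists_isTripletWitness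
  by_cases hp : p' = φ u
  · subst hp
    exact C.consistent_of_isTripletWitness_upper hw hx hy hz
  by_cases hq : q' = φ u
  · subst hq
    exact C.consistent_of_isTripletWitness_lower hw hx hy hz
  exact C.consistent_of_isTripletWitness_of_ne hw hp hq

end IsArcContraction

/-- let `N` be a level-1 network and `a = (u,v)` an arc with `v` not a
reticulation, `v` not a leaf and `u` not a reticulation.  Contracting `a` — i.e. taking
the quotient of `N` by the map `φ` that identifies exactly `u` and `v`, the arcs of the
quotient being exactly the `φ`-images of arcs of `N` not collapsed by `φ` — yields a
DAG `N'` that is again a level-1 network (acyclic, rooted at `φ(root)` with every vertex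
reachable, semi-binary and with at most one reticulation per biconnected component),
and every triplet consistent with `N'` is consistent with `N`. -/
theorem stmt_16 {X : Type} (N : PhyloNet X) (hN : N.Level1)
    (u v : N.V) (huv : N.arc u v)
    (hv_not_retic : ¬ IsRetic N.arc v)
    (hu_not_retic : ¬ IsRetic N.arc u)
    (hv_not_leaf : ¬ ∃ x, v = N.leafOf x)
    {V' : Type} (arc' : V' → V' → Prop) (φ : N.V → V')
    (hsurj : Function.Surjective φ)
    (hcol : φ u = φ v)
    (hinj : ∀ a b, φ a = φ b →
      a = b ∨ (a ∈ ({u, v} : Set N.V) ∧ b ∈ ({u, v} : Set N.V)))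
    (harc : ∀ a' b', arc' a' b' ↔
      ∃ a b, φ a = a' ∧ φ b = b' ∧ N.arc a b ∧ φ a ≠ φ b) :
    (∀ w', ¬ Relation.TransGen arc' w' w') ∧
    (∀ w', Relation.ReflTransGen arc' (φ N.root) w') ∧
    SemiBinary arc' ∧
    Level1Blocks arc' ∧
    (∀ a b c : X,
      Consistent arc' (φ (N.leafOf a)) (φ (N.leafOf b)) (φ (N.leafOf c)) →
      Consistent N.arc (N.leafOf a) (N.leafOf b) (N.leafOf c)) := by
  have hne : u ≠ v := by
    rintro rfl
    exact N.acyclic u (Relation.TransGen.single huv)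
  obtain ⟨σ, hσ, hσv⟩ := hsurj.exists_rightInverse_ne hne hcol
  have C : IsArcContraction N.arc arc' φ σ u v :=
    ⟨huv, hne, hcol, hinj, harc, hσ, hσv, hu_not_retic, hv_not_retic⟩
  refine ⟨C.acyclic N.acyclic, fun w' => ?_, C.semiBinary hN.1, C.level1Blocks hN.2,
    fun a b c h => ?_⟩
  · obtain ⟨w, rfl⟩ := hsurj w'
    exact C.reflTransGen_map (N.reach w)
  · have hleaf : ∀ t, φ (N.leafOf t) ≠ φ u ∧ σ (φ (N.leafOf t)) = N.leafOf t := by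
      intro t
      have hv : N.leafOf t ≠ v := fun h => hv_not_leaf ⟨t, h.symm⟩
      refine ⟨fun h => (C.eq_or_eq_of_map_eq_map_u h).elim (fun hu => ?_) hv, C.lift_map hv⟩
      exact (N.leaf_iff u).2 ⟨t, hu.symm⟩ v huv
    simpa only [(hleaf _).2] using C.consistent_lift h (hleaf a).1 (hleaf b).1 (hleaf c).1
end
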